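/- Every additive group homomorphism h : ℤ⁴ → ℝ which is non-vanishing on all lattice roots of Γ^{2,2} has 0 as an accumulation point of its values on the lattice roots: for every ε > 0 there exists a lattice root α with 0 < |h(α)| < ε. -/

import Mathlib

/-!
If `v` is isotropic and `α` is a root with `B(α, v) = 0`, then `α + j • v` is a root for every
`j : ℤ`, so the heights of roots contain the whole progression `h α + ℤ • h v`. Every vector is
`B`-orthogonal to some root, hence an isotropic `v` with `0 < h v < ε` produces a root of height
in `[0, h v)`. So if the heights of roots stay away from `0`, `h` maps each of the four totally
isotropic coordinate planes onto a discrete, hence cyclic, subgroup of `ℝ`; since `h` does not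
vanish on the roots `e₀ - e₁` and `e₂ - e₃`, these glue to one cyclic group containing every
`h eᵢ`. Then `h` is a real multiple of an integral functional, and every integral functional
vanishes on some root: the transvections of `Γ^{2,2}` run a Euclidean algorithm bringing its
coefficients to the form `(A, B, 0, 0)`, which vanishes on the root `(B, -A, 1, AB - 1)`.
-/

/-- A lattice root of `Γ^{2,2}`: an element `(k,l,m,n)` with `kl + mn = -1`,
equivalently of norm `B(α,α) = 2`. -/
def IsLatticeRoot (α : Fin 4 → ℤ) : Prop :=
  α 0 * α 1 + α 2 * α 3 = -1

def VanishesOnRoot (A B C D : ℤ) : Prop :=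
  ∃ k l m n : ℤ, k * l + m * n = -1 ∧ k * A + l * B + m * C + n * D = 0

namespace VanishesOnRoot

lemma of_swap_pairs {A B C D : ℤ} (h : VanishesOnRoot C D A B) : VanishesOnRoot A B C D := by
  obtain ⟨k, l, m, n, hroot, hzero⟩ := h
  exact ⟨m, n, k, l, by linear_combination hroot, by linear_combination hzero⟩

lemma of_reverse {A B C D : ℤ} (h : VanishesOnRoot D C B A) : VanishesOnRoot A B C D := by
  obtain ⟨k, l, m, n, hroot, hzero⟩ := h
  exact ⟨n, m, l, k, by linear_combination hroot, by linear_combination hzero⟩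

lemma of_reduce_third {A B C D : ℤ} (u : ℤ) (h : VanishesOnRoot A (B + u * D) (C - A * u) D) :
    VanishesOnRoot A B C D := by
  obtain ⟨k, l, m, n, hroot, hzero⟩ := h
  exact ⟨k - u * m, l, m, n + u * l, by linear_combination hroot, by linear_combination hzero⟩

lemma of_reduce_fourth {A B C D : ℤ} (u : ℤ) (h : VanishesOnRoot A (B + u * C) C (D - A * u)) :
    VanishesOnRoot A B C D := by
  obtain ⟨k, l, m, n, hroot, hzero⟩ := h
  exact ⟨k - u * n, l, m + u * l, n, by linear_combination hroot, by linear_combination hzero⟩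

lemma of_zero_zero (A B : ℤ) : VanishesOnRoot A B 0 0 :=
  ⟨B, -A, 1, A * B - 1, by ring, by ring⟩

lemma of_ne_zero {A : ℤ} (hA : A ≠ 0) (B C D : ℤ) : VanishesOnRoot A B C D := by
  induction hN : A.natAbs using Nat.strong_induction_on generalizing A B C D with
  | _ N IH =>
    have hrem : ∀ x : ℤ, (x % A).natAbs < N := fun x ↦ by
      have := Int.emod_lt x hA; have := Int.emod_nonneg x hA; omega
    -- a nonzero remainder of `C` or `D` modulo `A` is moved to the first slot, below `|A|`
    by_cases hC : C % A = 0
    · by_cases hD : D % A = 0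
      · refine of_reduce_third (C / A) (of_reduce_fourth (D / A) ?_)
        rw [← Int.emod_def, hC, ← Int.emod_def, hD]
        exact of_zero_zero _ _
      · refine of_reduce_fourth (D / A) (of_reverse ?_)
        rw [← Int.emod_def]
        exact IH _ (hrem D) hD _ _ _ rfl
    · refine of_reduce_third (C / A) (of_swap_pairs ?_)
      rw [← Int.emod_def]
      exact IH _ (hrem C) hC _ _ _ rfl

end VanishesOnRoot

theorem vanishesOnRoot (A B C D : ℤ) : VanishesOnRoot A B C D := by
  rcases ne_or_eq A 0 with hA | rfl
  · exact .of_ne_zero hA B C D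
  rcases ne_or_eq C 0 with hC | rfl
  · exact .of_swap_pairs (.of_ne_zero hC D 0 B)
  rcases ne_or_eq D 0 with hD | rfl
  · exact .of_reverse (.of_ne_zero hD 0 B 0)
  exact .of_zero_zero 0 B

def latticeForm (x y : Fin 4 → ℤ) : ℤ :=
  -(x 0 * y 1 + x 1 * y 0) - (x 2 * y 3 + x 3 * y 2)

def IsIsotropic (v : Fin 4 → ℤ) : Prop :=
  v 0 * v 1 + v 2 * v 3 = 0

theorem exists_root_latticeForm_eq_zero (v : Fin 4 → ℤ) :
    ∃ α, IsLatticeRoot α ∧ latticeForm α v = 0 := by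
  obtain ⟨k, l, m, n, hroot, hzero⟩ := vanishesOnRoot (v 1) (v 0) (v 3) (v 2)
  refine ⟨![k, l, m, n], hroot, ?_⟩
  simp only [latticeForm, Matrix.cons_val]
  linear_combination -hzero

lemma IsLatticeRoot.add_zsmul {α v : Fin 4 → ℤ} (hα : IsLatticeRoot α) (hv : IsIsotropic v)
    (hαv : latticeForm α v = 0) (j : ℤ) : IsLatticeRoot (α + j • v) := by
  simp only [IsLatticeRoot, IsIsotropic, latticeForm, Pi.add_apply, Pi.smul_apply,
    smul_eq_mul] at *
  linear_combination hα - j * hαv + j ^ 2 * hv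

def CommensurableSet (s : Set ℝ) : Prop :=
  ∃ r : ℝ, s ⊆ AddSubgroup.zmultiples r

namespace CommensurableSet

lemma subset {s t : Set ℝ} (ht : CommensurableSet t) (hst : s ⊆ t) : CommensurableSet s :=
  ht.imp fun _ hr ↦ hst.trans hr

lemma union {s t : Set ℝ} (hs : CommensurableSet s) (ht : CommensurableSet t) {y : ℝ}
    (hys : y ∈ s) (hyt : y ∈ t) (hy : y ≠ 0) : CommensurableSet (s ∪ t) := by
  obtain ⟨r, hr⟩ := hs
  obtain ⟨r', hr'⟩ := ht
  obtain ⟨m, hm⟩ := AddSubgroup.mem_zmultiples_iff.1 (hr hys)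
  obtain ⟨n, hn⟩ := AddSubgroup.mem_zmultiples_iff.1 (hr' hyt)
  rw [zsmul_eq_mul] at hm hn
  have hn0 : (n : ℝ) ≠ 0 := by rintro h0; rw [h0, zero_mul] at hn; exact hy hn.symm
  -- `y = m r = n r'`, so both `r` and `r'` are integer multiples of `r / n`
  refine ⟨r / n, Set.union_subset (hr.trans ?_) (hr'.trans ?_)⟩ <;>
    refine AddSubgroup.zmultiples_le_of_mem (AddSubgroup.mem_zmultiples_iff.2 ?_)
  · exact ⟨n, by rw [zsmul_eq_mul]; field_simp⟩
  · exact ⟨m, by rw [zsmul_eq_mul]; field_simp; linear_combination hm - hn⟩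

lemma of_cross {x x' y y' : ℝ} (hx : x ≠ 0) (hy : y ≠ 0)
    (h₁ : CommensurableSet {x, y}) (h₂ : CommensurableSet {x, y'})
    (h₃ : CommensurableSet {x', y}) : CommensurableSet {x, x', y, y'} :=
  ((h₁.union h₂ (by simp) (by simp) hx).union h₃ (by simp) (by simp) hy).subset
    fun z ↦ by simp only [Set.mem_insert_iff, Set.mem_singleton_iff, Set.mem_union]; tauto

lemma of_pairs {a b c d : ℝ} (hab : a ≠ b) (hcd : c ≠ d)
    (hac : CommensurableSet {a, c}) (had : CommensurableSet {a, d})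
    (hbc : CommensurableSet {b, c}) (hbd : CommensurableSet {b, d}) :
    CommensurableSet {a, b, c, d} := by
  rcases ne_or_eq a 0 with ha | rfl <;> rcases ne_or_eq c 0 with hc | rfl
  · exact of_cross ha hc hac had hbc
  · rw [Set.pair_comm]
    exact of_cross ha hcd.symm had hac hbd
  · rw [Set.insert_comm]
    exact of_cross hab.symm hc hbc hbd hac
  · rw [Set.insert_comm, Set.pair_comm]
    exact of_cross hab.symm hcd.symm hbd hbc had

end CommensurableSet

lemma AddMonoidHom.map_eq_sum_single {ι M : Type*} [Fintype ι] [DecidableEq ι] [AddCommGroup M]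
    (f : (ι → ℤ) →+ M) (x : ι → ℤ) : f x = ∑ i, x i • f (Pi.single i 1) := by
  conv_lhs => rw [← Finset.univ_sum_single x, map_sum]
  refine Finset.sum_congr rfl fun i _ ↦ ?_
  rw [← map_zsmul, ← Pi.single_smul, smul_eq_mul, mul_one]

lemma exists_root_map_mem_Ico {G : Type*} [AddCommGroup G] [LinearOrder G]
    [IsOrderedAddMonoid G] [Archimedean G] (h : (Fin 4 → ℤ) →+ G) {v : Fin 4 → ℤ}
    (hv : IsIsotropic v) (hpos : 0 < h v) :
    ∃ α, IsLatticeRoot α ∧ h α ∈ Set.Ico 0 (h v) := by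
  obtain ⟨α, hα, hαv⟩ := exists_root_latticeForm_eq_zero v
  obtain ⟨j, hj, -⟩ := existsUnique_add_zsmul_mem_Ico hpos (h α) 0
  refine ⟨α + j • v, hα.add_zsmul hv hαv j, ?_⟩
  simpa only [map_add, map_zsmul, zero_add] using hj

section Height

variable (h : (Fin 4 → ℤ) →+ ℝ)

lemma exists_root_map_eq_zero_of_commensurableSet (hh : CommensurableSet
    {h (Pi.single 0 1), h (Pi.single 1 1), h (Pi.single 2 1), h (Pi.single 3 1)}) :
    ∃ α, IsLatticeRoot α ∧ h α = 0 := by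
  obtain ⟨r, hr⟩ := hh
  simp only [Set.insert_subset_iff, Set.singleton_subset_iff, SetLike.mem_coe,
    AddSubgroup.mem_zmultiples_iff] at hr
  obtain ⟨⟨A₀, h₀⟩, ⟨A₁, h₁⟩, ⟨A₂, h₂⟩, ⟨A₃, h₃⟩⟩ := hr
  obtain ⟨α, hα, hαA⟩ := exists_root_latticeForm_eq_zero ![A₁, A₀, A₃, A₂]
  refine ⟨α, hα, ?_⟩
  have hsum : ((α 0 * A₀ + α 1 * A₁ + α 2 * A₂ + α 3 * A₃ : ℤ) : ℝ) = 0 := by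
    simp only [latticeForm, Matrix.cons_val] at hαA
    exact_mod_cast (by linear_combination -hαA)
  rw [h.map_eq_sum_single, Fin.sum_univ_four, ← h₀, ← h₁, ← h₂, ← h₃]
  push_cast at hsum
  simp only [zsmul_eq_mul]
  linear_combination r * hsum

variable {h} {ε : ℝ}

lemma map_isotropic_notMem_Ioo (hfar : ∀ α, IsLatticeRoot α → ε ≤ |h α|) {v : Fin 4 → ℤ}
    (hv : IsIsotropic v) : h v ∉ Set.Ioo 0 ε := by
  rintro ⟨hpos, hlt⟩
  obtain ⟨α, hα, hα0, hαv⟩ := exists_root_map_mem_Ico h hv hpos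
  have := hfar α hα
  rw [abs_of_nonneg hα0] at this
  linarith

lemma commensurableSet_pair (hε : 0 < ε) (hfar : ∀ α, IsLatticeRoot α → ε ≤ |h α|)
    {x y : Fin 4 → ℤ} (hxy : ∀ p q : ℤ, IsIsotropic (p • x + q • y)) :
    CommensurableSet {h x, h y} := by
  obtain ⟨g, hg⟩ := AddSubgroup.cyclic_of_isolated_zero hε
    (H := AddSubgroup.closure {h x, h y}) <| Set.disjoint_left.2 fun z hz ↦ by
      obtain ⟨p, q, rfl⟩ := AddSubgroup.mem_closure_pair.1 hz
      simpa only [map_add, map_zsmul] using map_isotropic_notMem_Ioo hfar (hxy p q)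
  exact ⟨g, by rw [AddSubgroup.zmultiples_eq_closure, ← hg]; exact AddSubgroup.subset_closure⟩

lemma commensurableSet_basis (hε : 0 < ε) (hfar : ∀ α, IsLatticeRoot α → ε ≤ |h α|) :
    CommensurableSet
      {h (Pi.single 0 1), h (Pi.single 1 1), h (Pi.single 2 1), h (Pi.single 3 1)} := by
  have hne : ∀ i j : Fin 4, IsLatticeRoot (Pi.single i 1 - Pi.single j 1) →
      h (Pi.single i 1) ≠ h (Pi.single j 1) := fun i j hij heq ↦ by
    have := hfar _ hij
    rw [map_sub, heq, sub_self, abs_zero] at this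
    linarith
  refine .of_pairs (hne 0 1 (by simp [IsLatticeRoot])) (hne 2 3 (by simp [IsLatticeRoot]))
    ?_ ?_ ?_ ?_ <;> exact commensurableSet_pair hε hfar fun p q ↦ by simp [IsIsotropic]

end Height

/-- Every additive group homomorphism `h : ℤ⁴ → ℝ` which is non-vanishing on
the lattice roots of `Γ^{2,2}` has `0` as an accumulation point of its values
on the lattice roots. -/
theorem height_accumulates_at_zero (h : (Fin 4 → ℤ) →+ ℝ)
    (hnv : ∀ α : Fin 4 → ℤ, IsLatticeRoot α → h α ≠ 0) :
    ∀ ε : ℝ, 0 < ε → ∃ α : Fin 4 → ℤ, IsLatticeRoot α ∧ 0 < |h α| ∧ |h α| < ε := by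
  by_contra! hgap
  obtain ⟨ε, hε, hgap⟩ := hgap
  have hfar : ∀ α, IsLatticeRoot α → ε ≤ |h α| :=
    fun α hα ↦ hgap α hα (abs_pos.2 (hnv α hα))
  obtain ⟨α, hα, hzero⟩ :=
    exists_root_map_eq_zero_of_commensurableSet h (commensurableSet_basis hε hfar)
  exact hnv α hα hzero
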